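/- Let F be a sparseness measure with cost function J on ℝⁿ, let A be an m×n real matrix, and let k ≥ 1. Then A satisfies RRC at sparsity k for J with some constant C > 0 if and only if there exists d > 0 such that the robust null space condition with parameter d holds for (A, k, J). -/

import Mathlib

/-!
RRC ⇒ RNSP: take `z ∈ ker A` and `w = z + η`. If the cost of `w` were not concentrated off a
`k`-set `T`, then `x̄ = w_T` is `k`-sparse, `x̂ = w_T - w` is no more costly, and
`A (x̄ - x̂) = A η`; RRC gives `‖w‖ ≤ C ‖A‖ ‖η‖`, whence `‖z‖ ≤ (1 + C ‖A‖) ‖η‖`.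

RNSP ⇒ RRC: subadditivity of `F (|·|)` puts the error `h = x̄ - x̂` in the cone
`J(h_{Tᶜ}) ≤ J(h_T)`, and `‖A h‖ ≤ 2ε`. The open mapping theorem splits `h = z + η` with
`z ∈ ker A` and `‖η‖ ≤ c ‖A h‖`; RNSP, read contrapositively, forces `d ‖z‖ ≤ ‖η‖`.
-/

noncomputable section

/-- `F : ℝ → ℝ` is a sparseness measure: nonnegative on `[0,∞)`,
vanishing exactly at `0`, and `F (|·|)` is subadditive on `ℝ`. -/
def SparsenessMeasure (F : ℝ → ℝ) : Prop :=
  (∀ t : ℝ, 0 ≤ t → 0 ≤ F t) ∧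
  (∀ t : ℝ, 0 ≤ t → (F t = 0 ↔ t = 0)) ∧
  (∀ x y : ℝ, F |x + y| ≤ F |x| + F |y|)

/-- The cost function `J(x) = ∑ i, F |x i|` on `ℝⁿ`. -/
def costJ {n : ℕ} (F : ℝ → ℝ) (x : EuclideanSpace ℝ (Fin n)) : ℝ :=
  ∑ i, F |x i|

/-- The restricted cost `J(x_T) = ∑ i ∈ T, F |x i|`. -/
def costJT {n : ℕ} (F : ℝ → ℝ) (T : Finset (Fin n)) (x : EuclideanSpace ℝ (Fin n)) : ℝ :=
  ∑ i ∈ T, F |x i|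

/-- `x` has at most `k` nonzero entries. -/
def Sparse {n : ℕ} (k : ℕ) (x : EuclideanSpace ℝ (Fin n)) : Prop :=
  ∃ T : Finset (Fin n), T.card ≤ k ∧ ∀ i ∉ T, x i = 0

/-- The matrix `A` acting as a continuous linear map between Euclidean spaces. -/
def mulVecCLM {m n : ℕ} (A : Matrix (Fin m) (Fin n) ℝ) :
    EuclideanSpace ℝ (Fin n) →L[ℝ] EuclideanSpace ℝ (Fin m) :=
  (((EuclideanSpace.equiv (Fin m) ℝ).symm : (Fin m → ℝ) →L[ℝ] EuclideanSpace ℝ (Fin m)).comp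
    (Matrix.mulVecLin A).toContinuousLinearMap).comp
    ((EuclideanSpace.equiv (Fin n) ℝ) : EuclideanSpace ℝ (Fin n) →L[ℝ] (Fin n → ℝ))

/-- `A` satisfies the robust recovery condition at sparsity `k` for the cost `J_F`
with constant `C`: for every `k`-sparse `x̄`, every `ε > 0`, every noise `v` with
`‖v‖ ≤ ε`, and every feasible `x̂` with `J(x̂) ≤ J(x̄)`, one has `‖x̄ - x̂‖ ≤ C ε`. -/
def RRC {m n : ℕ} (A : Matrix (Fin m) (Fin n) ℝ) (k : ℕ) (F : ℝ → ℝ) (C : ℝ) : Prop :=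
  ∀ xbar : EuclideanSpace ℝ (Fin n), Sparse k xbar →
    ∀ ε : ℝ, 0 < ε →
      ∀ v : EuclideanSpace ℝ (Fin m), ‖v‖ ≤ ε →
        ∀ xhat : EuclideanSpace ℝ (Fin n),
          ‖mulVecCLM A xhat - (mulVecCLM A xbar + v)‖ ≤ ε →
            costJ F xhat ≤ costJ F xbar → ‖xbar - xhat‖ ≤ C * ε

/-- The robust null space condition with parameter `d` for `(A, k, J_F)`. -/
def RNSP {m n : ℕ} (A : Matrix (Fin m) (Fin n) ℝ) (k : ℕ) (F : ℝ → ℝ) (d : ℝ) : Prop :=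
  ∀ z ∈ LinearMap.ker (mulVecCLM A : EuclideanSpace ℝ (Fin n) →ₗ[ℝ] EuclideanSpace ℝ (Fin m)), z ≠ 0 →
    ∀ η : EuclideanSpace ℝ (Fin n), ‖η‖ < d * ‖z‖ →
      ∀ T : Finset (Fin n), T.card ≤ k →
        costJT F T (z + η) < costJT F Tᶜ (z + η)

theorem ContinuousLinearMap.exists_mem_ker_norm_sub_le {𝕜 E F : Type*} [NontriviallyNormedField 𝕜]
    [CompleteSpace 𝕜] [NormedAddCommGroup E] [NormedSpace 𝕜 E] [FiniteDimensional 𝕜 E]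
    [NormedAddCommGroup F] [NormedSpace 𝕜 F] (f : E →L[𝕜] F) :
    ∃ c > 0, ∀ x, ∃ z ∈ LinearMap.ker (f : E →ₗ[𝕜] F), ‖x - z‖ ≤ c * ‖f x‖ := by
  have := FiniteDimensional.complete 𝕜 E
  have := FiniteDimensional.complete 𝕜 (LinearMap.range (f : E →ₗ[𝕜] F))
  obtain ⟨c, hc, hpre⟩ := f.rangeRestrict.exists_preimage_norm_le f.surjective_rangeRestrict
  refine ⟨c, hc, fun x => ?_⟩
  obtain ⟨y, hy, hyx⟩ := hpre (f.rangeRestrict x)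
  refine ⟨x - y, ?_, by rw [sub_sub_cancel]; exact hyx⟩
  rw [LinearMap.mem_ker, ContinuousLinearMap.coe_coe, map_sub, sub_eq_zero]
  exact congrArg Subtype.val hy.symm

section Cost

variable {n : ℕ} {F : ℝ → ℝ}

theorem costJ_eq_costJT_add_costJT_compl (T : Finset (Fin n)) (x : EuclideanSpace ℝ (Fin n)) :
    costJ F x = costJT F T x + costJT F Tᶜ x :=
  (Finset.sum_add_sum_compl T _).symm

theorem costJ_eq_costJT_of_forall_notMem_eq_zero (hF0 : F 0 = 0) {T : Finset (Fin n)}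
    {x : EuclideanSpace ℝ (Fin n)} (hx : ∀ i ∉ T, x i = 0) : costJ F x = costJT F T x := by
  rw [costJ_eq_costJT_add_costJT_compl T, add_eq_left]
  exact Finset.sum_eq_zero fun i hi => by rw [hx i (Finset.mem_compl.mp hi), abs_zero, hF0]

def restrictTo (T : Finset (Fin n)) (w : EuclideanSpace ℝ (Fin n)) : EuclideanSpace ℝ (Fin n) :=
  WithLp.toLp 2 fun i => if i ∈ T then w i else 0

theorem restrictTo_apply (T : Finset (Fin n)) (w : EuclideanSpace ℝ (Fin n)) (i : Fin n) :
    restrictTo T w i = if i ∈ T then w i else 0 :=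
  rfl

theorem sparse_restrictTo {k : ℕ} {T : Finset (Fin n)} (hT : T.card ≤ k)
    (w : EuclideanSpace ℝ (Fin n)) : Sparse k (restrictTo T w) :=
  ⟨T, hT, fun i hi => by rw [restrictTo_apply, if_neg hi]⟩

theorem costJ_restrictTo (hF0 : F 0 = 0) (T : Finset (Fin n)) (w : EuclideanSpace ℝ (Fin n)) :
    costJ F (restrictTo T w) = costJT F T w := by
  rw [costJ_eq_costJT_of_forall_notMem_eq_zero hF0 fun i hi => by
    rw [restrictTo_apply, if_neg hi]]
  exact Finset.sum_congr rfl fun i hi => by rw [restrictTo_apply, if_pos hi]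

theorem costJ_restrictTo_sub_self (hF0 : F 0 = 0) (T : Finset (Fin n))
    (w : EuclideanSpace ℝ (Fin n)) : costJ F (restrictTo T w - w) = costJT F Tᶜ w := by
  have hT : ∀ i ∈ T, (restrictTo T w - w) i = 0 := fun i hi => by
    simp [restrictTo_apply, hi]
  rw [costJ_eq_costJT_of_forall_notMem_eq_zero (T := Tᶜ) hF0 fun i hi =>
    hT i (by simpa using hi)]
  refine Finset.sum_congr rfl fun i hi => ?_
  simp [restrictTo_apply, Finset.mem_compl.mp hi]

theorem costJT_compl_sub_le_costJT_sub (hF0 : F 0 = 0)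
    (hF : ∀ x y : ℝ, F |x + y| ≤ F |x| + F |y|) {T : Finset (Fin n)}
    {xbar xhat : EuclideanSpace ℝ (Fin n)} (hsupp : ∀ i ∉ T, xbar i = 0)
    (hJ : costJ F xhat ≤ costJ F xbar) :
    costJT F Tᶜ (xbar - xhat) ≤ costJT F T (xbar - xhat) := by
  have hcompl : costJT F Tᶜ xhat = costJT F Tᶜ (xbar - xhat) :=
    Finset.sum_congr rfl fun i hi => by
      rw [PiLp.sub_apply, hsupp i (Finset.mem_compl.mp hi), zero_sub, abs_neg]
  have hT : costJT F T xbar ≤ costJT F T xhat + costJT F T (xbar - xhat) := by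
    rw [costJT, costJT, costJT, ← Finset.sum_add_distrib]
    refine Finset.sum_le_sum fun i _ => ?_
    simpa [PiLp.sub_apply] using hF (xhat i) (xbar i - xhat i)
  rw [costJ_eq_costJT_of_forall_notMem_eq_zero hF0 hsupp,
    costJ_eq_costJT_add_costJT_compl T xhat] at hJ
  linarith

end Cost

section Recovery

variable {m n k : ℕ} {A : Matrix (Fin m) (Fin n) ℝ} {F : ℝ → ℝ}

theorem RRC.norm_sub_le_of_costJ_le {C : ℝ} (h : RRC A k F C)
    {xbar xhat : EuclideanSpace ℝ (Fin n)} (hx : Sparse k xbar) (hJ : costJ F xhat ≤ costJ F xbar) :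
    ‖xbar - xhat‖ ≤ C * ‖mulVecCLM A (xbar - xhat)‖ := by
  set r := ‖mulVecCLM A (xbar - xhat)‖
  -- the noise `A (xhat - xbar)` makes `xhat` exactly feasible, at every level `ε > r`
  have hbound : ∀ δ > 0, ‖xbar - xhat‖ ≤ C * (r + δ) := fun δ hδ => by
    refine h xbar hx (r + δ) (by positivity) (mulVecCLM A xhat - mulVecCLM A xbar) ?_ xhat ?_ hJ
    · rw [← map_sub, ← norm_neg, ← map_neg, neg_sub]
      linarith
    · rw [add_sub_cancel, sub_self, norm_zero]
      positivity
  have hlim : Filter.Tendsto (fun δ => C * (r + δ)) (nhdsWithin 0 (Set.Ioi 0)) (nhds (C * r)) := by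
    have hcont : Continuous fun δ => C * (r + δ) := by fun_prop
    simpa using (hcont.tendsto 0).mono_left nhdsWithin_le_nhds
  exact ge_of_tendsto hlim (eventually_nhdsWithin_of_forall hbound)

theorem RRC.rnsp {C : ℝ} (h : RRC A k F C) (hF0 : F 0 = 0) (hC : 0 ≤ C) :
    RNSP A k F (1 + C * ‖mulVecCLM A‖)⁻¹ := by
  intro z hz hz0 η hη T hT
  by_contra! hcone
  set w := z + η
  have hAz : mulVecCLM A z = 0 := hz
  have hAw : mulVecCLM A w = mulVecCLM A η := by rw [map_add, hAz, zero_add]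
  have hw : ‖w‖ ≤ C * ‖mulVecCLM A‖ * ‖η‖ := by
    have := h.norm_sub_le_of_costJ_le (xhat := restrictTo T w - w) (sparse_restrictTo hT w)
      (by rwa [costJ_restrictTo hF0, costJ_restrictTo_sub_self hF0])
    rw [sub_sub_cancel, hAw] at this
    calc ‖w‖ ≤ C * ‖mulVecCLM A η‖ := this
      _ ≤ C * ‖mulVecCLM A‖ * ‖η‖ := by
        rw [mul_assoc]; exact mul_le_mul_of_nonneg_left ((mulVecCLM A).le_opNorm η) hC
  have hpos : 0 < 1 + C * ‖mulVecCLM A‖ := by positivity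
  have hz_le : ‖z‖ ≤ (1 + C * ‖mulVecCLM A‖) * ‖η‖ := by
    calc ‖z‖ = ‖w - η‖ := by rw [add_sub_cancel_right]
      _ ≤ ‖w‖ + ‖η‖ := norm_sub_le _ _
      _ ≤ (1 + C * ‖mulVecCLM A‖) * ‖η‖ := by linarith
  have hη' := (lt_inv_mul_iff₀ hpos).mp hη
  linarith

theorem RNSP.mul_norm_le {d : ℝ} (h : RNSP A k F d)
    {z : EuclideanSpace ℝ (Fin n)} (hz : z ∈ LinearMap.ker
      (mulVecCLM A : EuclideanSpace ℝ (Fin n) →ₗ[ℝ] EuclideanSpace ℝ (Fin m)))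
    (η : EuclideanSpace ℝ (Fin n)) {T : Finset (Fin n)} (hT : T.card ≤ k)
    (hcone : costJT F Tᶜ (z + η) ≤ costJT F T (z + η)) : d * ‖z‖ ≤ ‖η‖ := by
  by_contra! hη
  rcases eq_or_ne z 0 with rfl | hz0
  · simp only [norm_zero, mul_zero] at hη
    exact (norm_nonneg η).not_gt hη
  · exact (h z hz hz0 η hη T hT).not_ge hcone

theorem RNSP.rrc {d : ℝ} (h : RNSP A k F d) (hd : 0 < d) (hF0 : F 0 = 0)
    (hF : ∀ x y : ℝ, F |x + y| ≤ F |x| + F |y|) {c : ℝ} (hc : 0 ≤ c)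
    (hker : ∀ x, ∃ z ∈ LinearMap.ker
      (mulVecCLM A : EuclideanSpace ℝ (Fin n) →ₗ[ℝ] EuclideanSpace ℝ (Fin m)),
      ‖x - z‖ ≤ c * ‖mulVecCLM A x‖) :
    RRC A k F (2 * c * (1 + d⁻¹)) := by
  rintro xbar ⟨T, hT, hsupp⟩ ε - v hv xhat hres hJ
  have hA : ‖mulVecCLM A (xbar - xhat)‖ ≤ 2 * ε := by
    calc ‖mulVecCLM A (xbar - xhat)‖
        = ‖(mulVecCLM A xhat - (mulVecCLM A xbar + v)) + v‖ := by
          rw [map_sub, ← norm_neg]; congr 1; abel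
      _ ≤ 2 * ε := by linarith [norm_add_le (mulVecCLM A xhat - (mulVecCLM A xbar + v)) v]
  obtain ⟨z, hz, hdist⟩ := hker (xbar - xhat)
  set η := xbar - xhat - z
  have hη : ‖η‖ ≤ 2 * c * ε :=
    (hdist.trans (mul_le_mul_of_nonneg_left hA hc)).trans_eq (by ring)
  have hzη : z + η = xbar - xhat := add_sub_cancel _ _
  have hz_le : d * ‖z‖ ≤ ‖η‖ := h.mul_norm_le hz η hT <| by
    rw [hzη]; exact costJT_compl_sub_le_costJT_sub hF0 hF hsupp hJ
  calc ‖xbar - xhat‖ ≤ ‖z‖ + ‖η‖ := hzη ▸ norm_add_le z η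
    _ ≤ d⁻¹ * ‖η‖ + ‖η‖ := by gcongr; rwa [le_inv_mul_iff₀ hd]
    _ ≤ 2 * c * (1 + d⁻¹) * ε := by nlinarith [inv_pos.mpr hd]

end Recovery

theorem stmt2_general {m n : ℕ} (F : ℝ → ℝ) (hF : SparsenessMeasure F)
    (A : Matrix (Fin m) (Fin n) ℝ) (k : ℕ) :
    (∃ C > 0, RRC A k F C) ↔ (∃ d > 0, RNSP A k F d) := by
  obtain ⟨-, hF_eq_zero, hF_subadd⟩ := hF
  have hF0 : F 0 = 0 := (hF_eq_zero 0 le_rfl).mpr rfl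
  constructor
  · rintro ⟨C, hC, hRRC⟩
    exact ⟨_, by positivity, hRRC.rnsp hF0 hC.le⟩
  · rintro ⟨d, hd, hRNSP⟩
    obtain ⟨c, hc, hker⟩ := (mulVecCLM A).exists_mem_ker_norm_sub_le
    exact ⟨_, by positivity, hRNSP.rrc hd hF0 hF_subadd hc.le hker⟩

/-- Corollary 1: `A` satisfies RRC at sparsity `k` for `J` with some
constant `C > 0` if and only if the robust null space condition holds for some `d > 0`. -/
theorem stmt2 {m n : ℕ} (F : ℝ → ℝ) (hF : SparsenessMeasure F)
    (A : Matrix (Fin m) (Fin n) ℝ) (k : ℕ) (hk : 1 ≤ k) :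
    (∃ C > 0, RRC A k F C) ↔ (∃ d > 0, RNSP A k F d) :=
  stmt2_general F hF A k
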